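/- Fix k ≥ 1. Let f(n) be the number of functions c : Fin n → {Empty, Blue, Red} such that any two distinct indices i < j with j - i ≤ k are not both non-Empty. Then f(n) = 2n + 1 for all n ≤ k, and f(n) = f(n-1) + 2·f(n-k-1) for all n > k. -/

import Mathlib

inductive Color : Type
  | Empty | Blue | Red
  deriving DecidableEq

instance : Fintype Color where
  elems := {Color.Empty, Color.Blue, Color.Red}
  complete := by intro x; cases x <;> simp

/-- Number of EnCis(k) positions on the path `P_n`: colorings where any two
colored (non-`Empty`) vertices are at distance greater than `k`. -/
def enCisPath (k n : ℕ) : ℕ :=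
  Fintype.card {c : Fin n → Color //
    ∀ i j : Fin n, i < j → (j : ℕ) - (i : ℕ) ≤ k →
      ¬(c i ≠ Color.Empty ∧ c j ≠ Color.Empty)}

/-!
Let `f n` count the positions on `n` vertices, and split a position on `n + 1` vertices
according to the colour of its last vertex. If that vertex is empty, what remains is an
arbitrary position on `n` vertices. Otherwise the `k` vertices before it are empty, so what
remains is a position on the first `n - k` vertices padded with empty vertices. Hence
`f (n + 1) = f n + 2 f (n - k)` for every `n`, with truncated subtraction; for `n < k` this
reads `f (n + 1) = f n + 2`, whence `f n = 2 n + 1` up to `k`.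
-/

variable {α : Type*}

def IsSparse (k : ℕ) (e : α) {n : ℕ} (c : Fin n → α) : Prop :=
  ∀ i j : Fin n, i < j → (j : ℕ) - (i : ℕ) ≤ k → ¬(c i ≠ e ∧ c j ≠ e)

namespace IsSparse

variable {k : ℕ} {e : α}

instance [DecidableEq α] {n : ℕ} : DecidablePred (IsSparse k e (n := n)) :=
  fun _ => by unfold IsSparse; infer_instance

theorem snoc_iff {n : ℕ} {c : Fin n → α} {x : α} :
    IsSparse k e (Fin.snoc c x : Fin (n + 1) → α) ↔
      IsSparse k e c ∧ (x ≠ e → ∀ i : Fin n, n - k ≤ (i : ℕ) → c i = e) := by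
  constructor
  · intro h
    refine ⟨fun i j hij hji hne => h i.castSucc j.castSucc (by simpa) hji (by simpa using hne),
      fun hx i hi => ?_⟩
    by_contra hci
    exact h i.castSucc (Fin.last n) (Fin.castSucc_lt_last i) (by simp; omega)
      (by simpa using ⟨hci, hx⟩)
  · rintro ⟨hc, htail⟩ i j hij hji ⟨hi, hj⟩
    induction j using Fin.lastCases with
    | last =>
      induction i using Fin.lastCases with
      | last => exact lt_irrefl _ hij
      | cast i =>
        simp only [Fin.snoc_last, Fin.snoc_castSucc] at hi hj
        exact hi (htail hj i (by simp at hji; omega))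
    | cast j =>
      induction i using Fin.lastCases with
      | last => exact absurd hij (not_lt.2 (Fin.le_last _))
      | cast i =>
        simp only [Fin.snoc_castSucc] at hi hj
        exact hc i j (by simpa using hij) hji ⟨hi, hj⟩

def padEquiv {m n : ℕ} (hmn : m ≤ n) :
    {c : Fin m → α // IsSparse k e c} ≃
      {c : Fin n → α // IsSparse k e c ∧ ∀ i : Fin n, m ≤ (i : ℕ) → c i = e} where
  toFun c := ⟨fun i => if h : (i : ℕ) < m then c.1 ⟨i, h⟩ else e,
    fun i j hij hji ⟨hi, hj⟩ => by
      have hjm : (j : ℕ) < m := by by_contra h; exact hj (dif_neg h)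
      have him : (i : ℕ) < m := lt_trans hij hjm
      simp only [dif_pos him, dif_pos hjm] at hi hj
      exact c.2 ⟨i, him⟩ ⟨j, hjm⟩ hij hji ⟨hi, hj⟩,
    fun i hi => dif_neg (not_lt.2 hi)⟩
  invFun c := ⟨fun i => c.1 (Fin.castLE hmn i), fun i j hij hji => c.2.1 _ _ hij hji⟩
  left_inv c := by ext i; simp
  right_inv c := by
    ext i
    by_cases h : (i : ℕ) < m
    · simp [h]
    · simp [h, c.2.2 i (not_lt.1 h)]

end IsSparse

section Card

variable [Fintype α] [DecidableEq α] (k : ℕ) (e : α)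

theorem card_isSparse_zero : Fintype.card {c : Fin 0 → α // IsSparse k e c} = 1 :=
  Fintype.card_eq_one_iff.2
    ⟨⟨Fin.elim0, fun i => i.elim0⟩, fun _ => Subtype.ext (funext fun i => i.elim0)⟩

theorem card_isSparse_succ (n : ℕ) :
    Fintype.card {c : Fin (n + 1) → α // IsSparse k e c} =
      Fintype.card {c : Fin n → α // IsSparse k e c} +
        (Fintype.card α - 1) * Fintype.card {c : Fin (n - k) → α // IsSparse k e c} := by
  let P (x : α) (c : Fin n → α) : Prop :=
    IsSparse k e c ∧ (x ≠ e → ∀ i : Fin n, n - k ≤ (i : ℕ) → c i = e)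
  have split_last : (Σ x, {c // P x c}) ≃ {c : Fin (n + 1) → α // IsSparse k e c} :=
    (Equiv.subtypeProdEquivSigmaSubtype P).symm.trans
      ((Fin.snocEquiv fun _ => α).subtypeEquiv fun _ => IsSparse.snoc_iff.symm)
  have last_eq : Fintype.card {c // P e c} = Fintype.card {c : Fin n → α // IsSparse k e c} :=
    Fintype.card_congr (Equiv.subtypeEquivRight fun c => by simp [P])
  have last_ne (x : α) (hx : x ≠ e) :
      Fintype.card {c // P x c} = Fintype.card {c : Fin (n - k) → α // IsSparse k e c} :=
    Fintype.card_congr ((Equiv.subtypeEquivRight fun c => by simp [P, hx]).trans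
      (IsSparse.padEquiv (Nat.sub_le n k)).symm)
  rw [← Fintype.card_congr split_last, Fintype.card_sigma, Fintype.sum_eq_add_sum_compl e,
    last_eq, Finset.sum_congr rfl fun x hx => last_ne x (by simpa using hx), Finset.sum_const,
    Finset.card_compl, Finset.card_singleton, smul_eq_mul]

end Card

theorem enCisPath_eq_card_isSparse (k n : ℕ) :
    enCisPath k n = Fintype.card {c : Fin n → Color // IsSparse k Color.Empty c} :=
  Fintype.card_congr (Equiv.refl _)

theorem enCisPath_zero (k : ℕ) : enCisPath k 0 = 1 := by
  rw [enCisPath_eq_card_isSparse, card_isSparse_zero]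

theorem enCisPath_succ (k n : ℕ) :
    enCisPath k (n + 1) = enCisPath k n + 2 * enCisPath k (n - k) := by
  simp only [enCisPath_eq_card_isSparse, card_isSparse_succ]
  rfl

theorem enCisPath_of_le {k n : ℕ} (hn : n ≤ k) : enCisPath k n = 2 * n + 1 := by
  induction n with
  | zero => exact enCisPath_zero k
  | succ n ih =>
    rw [enCisPath_succ, ih (by omega), Nat.sub_eq_zero_of_le (by omega), enCisPath_zero]
    omega

theorem enCisPath_recursion (k : ℕ) :
    (∀ n : ℕ, n ≤ k → enCisPath k n = 2 * n + 1) ∧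
    (∀ n : ℕ, k < n →
      enCisPath k n = enCisPath k (n - 1) + 2 * enCisPath k (n - k - 1)) := by
  refine ⟨fun n hn => enCisPath_of_le hn, fun n hn => ?_⟩
  obtain ⟨m, rfl⟩ : ∃ m, n = m + 1 := ⟨n - 1, by omega⟩
  rw [Nat.add_sub_cancel, Nat.sub_right_comm, Nat.add_sub_cancel]
  exact enCisPath_succ k m
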